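/- Fix natural numbers k ≥ 1 and n ≥ 1, and let P_k be the partially ordered set on the 2k elements {(i,0) : 1 ≤ i ≤ k} ∪ {(i,1) : 1 ≤ i ≤ k} whose order is generated by the relations (i,0) < (i,1) for each i and (i,1) < (j,1) for i < j. Then: (a) the number of order-preserving maps f from P_k to the chain {1, 2, …, n} (meaning x ≤ y implies f(x) ≤ f(y)) equals S(n+k, n); and (b) the number of strictly order-preserving maps g from P_k to {1, 2, …, n} (meaning x < y implies g(x) < g(y)) equals c(n, n−k), taken to be 0 when k > n. -/

import Mathlib

/-- The Stirling cycle number `c(n,k)`: the number of permutations of an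
`n`-element set whose decomposition into disjoint cycles (counting fixed
points as cycles) consists of exactly `k` cycles. -/
noncomputable def stirlingCycle (n k : ℕ) : ℕ :=
  Nat.card {σ : Equiv.Perm (Fin n) //
    σ.cycleType.card + Nat.card {x : Fin n // σ x = x} = k}

/-- The Stirling subset number `S(n,k)`: the number of partitions of an
`n`-element set into exactly `k` nonempty subsets. -/
noncomputable def stirlingSubset (n k : ℕ) : ℕ :=
  Nat.card {P : Finset (Finset (Fin n)) //
    P.card = k ∧ (∀ s ∈ P, s.Nonempty) ∧ ∀ x : Fin n, ∃! s, s ∈ P ∧ x ∈ s}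

/-- The order relation on Gessel's poset `P_k`, whose elements are the `2k`
pairs `(i, 0)` and `(i, 1)` for `i : Fin k`: the partial order generated by
the relations `(i,0) < (i,1)` and `(i,1) < (j,1)` for `i < j`.  Explicitly,
`a ≤ b` iff `a = b`, or `a = (i,0)`, `b = (j,1)` with `i ≤ j`, or
`a = (i,1)`, `b = (j,1)` with `i < j`. -/
def gesselLE (k : ℕ) (a b : Fin k × Fin 2) : Prop :=
  a = b ∨ (a.2 = 0 ∧ b.2 = 1 ∧ a.1 ≤ b.1) ∨ (a.2 = 1 ∧ b.2 = 1 ∧ a.1 < b.1)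

open Equiv Equiv.Perm Finset

section MapCounts

/-- weak pair condition -/
def WPcond (n k : ℕ) (ab : (Fin k → Fin n) × (Fin k → Fin n)) : Prop :=
  Monotone ab.2 ∧ ∀ i, ab.1 i ≤ ab.2 i

/-- strict pair condition -/
def SPcond (n k : ℕ) (ab : (Fin k → Fin n) × (Fin k → Fin n)) : Prop :=
  StrictMono ab.2 ∧ ∀ i, ab.1 i < ab.2 i

noncomputable def Ac (n k : ℕ) : ℕ := Nat.card {ab // WPcond n k ab}
noncomputable def Bc (n k : ℕ) : ℕ := Nat.card {ab // SPcond n k ab}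

lemma monotone_snoc {k : ℕ} {α : Type*} [Preorder α] (b : Fin k → α) (c : α)
    (hb : Monotone b) (hc : ∀ i, b i ≤ c) : Monotone (Fin.snoc b c) := by
  intro i j hij
  induction j using Fin.lastCases with
  | last =>
    simp only [Fin.snoc_last]
    induction i using Fin.lastCases with
    | last => simp
    | cast i => simpa using hc i
  | cast j =>
    induction i using Fin.lastCases with
    | last => exact absurd (lt_of_lt_of_le (Fin.castSucc_lt_last j) hij) (lt_irrefl _)
    | cast i =>
      simpa using hb (Fin.castSucc_le_castSucc_iff.mp hij)

lemma strictMono_snoc {k : ℕ} {α : Type*} [Preorder α] (b : Fin k → α) (c : α)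
    (hb : StrictMono b) (hc : ∀ i, b i < c) : StrictMono (Fin.snoc b c) := by
  intro i j hij
  induction j using Fin.lastCases with
  | last =>
    simp only [Fin.snoc_last]
    induction i using Fin.lastCases with
    | last => exact absurd hij (lt_irrefl _)
    | cast i => simpa using hc i
  | cast j =>
    induction i using Fin.lastCases with
    | last => exact absurd (hij.trans (Fin.castSucc_lt_last j)) (lt_irrefl _)
    | cast i =>
      simpa using hb (Fin.castSucc_lt_castSucc_iff.mp hij)

/-- split equiv, weak, top case -/
noncomputable def wpE1 (n k : ℕ) :
    {x : {ab // WPcond (n+1) (k+1) ab} // x.1.2 (Fin.last k) = Fin.last n} ≃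
      (Fin (n+1) × {ab // WPcond (n+1) k ab}) where
  toFun x := (x.1.1.1 (Fin.last k),
    ⟨(fun i => x.1.1.1 i.castSucc, fun i => x.1.1.2 i.castSucc),
     fun i j hij => x.1.2.1 (Fin.castSucc_le_castSucc_iff.mpr hij),
     fun i => x.1.2.2 i.castSucc⟩)
  invFun ce :=
    ⟨⟨(Fin.snoc ce.2.1.1 ce.1, Fin.snoc ce.2.1.2 (Fin.last n)),
      monotone_snoc _ _ ce.2.2.1 (fun i => Fin.le_last _),
      fun i => by
        induction i using Fin.lastCases with
        | last => simpa using Fin.le_last ce.1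
        | cast i => simpa using ce.2.2.2 i⟩,
     by simp⟩
  left_inv x := by
    apply Subtype.ext; apply Subtype.ext
    apply Prod.ext <;> funext p <;>
      induction p using Fin.lastCases <;> simp [x.2]
  right_inv ce := by
    apply Prod.ext
    · simp
    · apply Subtype.ext; apply Prod.ext <;> funext i <;> simp

end MapCounts

section E2
/-- split equiv, weak, non-top case -/
noncomputable def wpE2 (n k : ℕ) :
    {x : {ab // WPcond (n+1) (k+1) ab} // x.1.2 (Fin.last k) ≠ Fin.last n} ≃
      {ab // WPcond n (k+1) ab} where
  toFun x :=
    have hb : ∀ i, (x.1.1.2 i : ℕ) < n := fun i => by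
      have h1 : (x.1.1.2 i : ℕ) ≤ x.1.1.2 (Fin.last k) :=
        Fin.le_def.mp (x.1.2.1 (Fin.le_last i))
      have h2 : (x.1.1.2 (Fin.last k) : ℕ) < n := by
        have hv : (x.1.1.2 (Fin.last k) : ℕ) ≠ n := fun h => x.2 (Fin.ext h)
        have hlt := (x.1.1.2 (Fin.last k)).isLt
        omega
      omega
    ⟨(fun i => ⟨(x.1.1.1 i : ℕ), lt_of_le_of_lt (x.1.2.2 i) (hb i)⟩,
      fun i => ⟨(x.1.1.2 i : ℕ), hb i⟩),
     fun i j hij => Fin.mk_le_mk.mpr (Fin.le_def.mp (x.1.2.1 hij)),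
     fun i => Fin.mk_le_mk.mpr (Fin.le_def.mp (x.1.2.2 i))⟩
  invFun y :=
    ⟨⟨(fun i => ⟨(y.1.1 i : ℕ), by have := (y.1.1 i).isLt; omega⟩,
       fun i => ⟨(y.1.2 i : ℕ), by have := (y.1.2 i).isLt; omega⟩),
      fun i j hij => Fin.mk_le_mk.mpr (Fin.le_def.mp (y.2.1 hij)),
      fun i => Fin.mk_le_mk.mpr (Fin.le_def.mp (y.2.2 i))⟩,
     fun h => by
      have hv : ((y.1.2 (Fin.last k) : ℕ)) = n := congrArg Fin.val h
      have h2 := (y.1.2 (Fin.last k)).isLt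
      omega⟩
  left_inv x := by
    apply Subtype.ext; apply Subtype.ext
    apply Prod.ext <;> funext i <;> apply Fin.ext <;> rfl
  right_inv y := by
    apply Subtype.ext
    apply Prod.ext <;> funext i <;> apply Fin.ext <;> rfl
end E2

/-- split equiv, strict, top case -/
noncomputable def spE1 (n k : ℕ) :
    {x : {ab // SPcond (n+1) (k+1) ab} // x.1.2 (Fin.last k) = Fin.last n} ≃
      (Fin n × {ab // SPcond n k ab}) where
  toFun x :=
    have hb : ∀ i : Fin k, (x.1.1.2 i.castSucc : ℕ) < n := fun i => by
      have h1 : (x.1.1.2 i.castSucc : ℕ) < x.1.1.2 (Fin.last k) :=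
        Fin.lt_def.mp (x.1.2.1 (Fin.castSucc_lt_last i))
      have h2 : (x.1.1.2 (Fin.last k) : ℕ) = n := congrArg Fin.val x.2
      omega
    (⟨(x.1.1.1 (Fin.last k) : ℕ), by
        have h1 : (x.1.1.1 (Fin.last k) : ℕ) < x.1.1.2 (Fin.last k) :=
          Fin.lt_def.mp (x.1.2.2 (Fin.last k))
        have h2 : (x.1.1.2 (Fin.last k) : ℕ) = n := congrArg Fin.val x.2
        omega⟩,
     ⟨(fun i => ⟨(x.1.1.1 i.castSucc : ℕ),
          lt_of_lt_of_le (Fin.lt_def.mp (x.1.2.2 i.castSucc)) (le_of_lt (hb i))⟩,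
       fun i => ⟨(x.1.1.2 i.castSucc : ℕ), hb i⟩),
      fun i j hij => Fin.mk_lt_mk.mpr
        (Fin.lt_def.mp (x.1.2.1 (Fin.castSucc_lt_castSucc_iff.mpr hij))),
      fun i => Fin.mk_lt_mk.mpr (Fin.lt_def.mp (x.1.2.2 i.castSucc))⟩)
  invFun ce :=
    ⟨⟨(Fin.snoc (fun i => ⟨(ce.2.1.1 i : ℕ), by have := (ce.2.1.1 i).isLt; omega⟩)
         ⟨(ce.1 : ℕ), by have := ce.1.isLt; omega⟩,
       Fin.snoc (fun i => ⟨(ce.2.1.2 i : ℕ), by have := (ce.2.1.2 i).isLt; omega⟩)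
         (Fin.last n)),
      strictMono_snoc _ _
        (fun i j hij => Fin.mk_lt_mk.mpr (Fin.lt_def.mp (ce.2.2.1 hij)))
        (fun i => Fin.mk_lt_mk.mpr (by have := (ce.2.1.2 i).isLt; simp)),
      fun i => by
        induction i using Fin.lastCases with
        | last =>
          simp only [Fin.snoc_last]
          exact Fin.mk_lt_mk.mpr (by have := ce.1.isLt; simp)
        | cast i =>
          simp only [Fin.snoc_castSucc]
          exact Fin.mk_lt_mk.mpr (Fin.lt_def.mp (ce.2.2.2 i))⟩,
     by simp⟩
  left_inv x := by
    apply Subtype.ext; apply Subtype.ext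
    apply Prod.ext <;> funext p <;>
      induction p using Fin.lastCases <;> apply Fin.ext <;>
        simp [congrArg Fin.val x.2]
  right_inv ce := by
    apply Prod.ext
    · apply Fin.ext; simp
    · apply Subtype.ext; apply Prod.ext <;> funext i <;> apply Fin.ext <;> simp

/-- split equiv, strict, non-top case -/
noncomputable def spE2 (n k : ℕ) :
    {x : {ab // SPcond (n+1) (k+1) ab} // x.1.2 (Fin.last k) ≠ Fin.last n} ≃
      {ab // SPcond n (k+1) ab} where
  toFun x :=
    have hb : ∀ i, (x.1.1.2 i : ℕ) < n := fun i => by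
      have h1 : (x.1.1.2 i : ℕ) ≤ x.1.1.2 (Fin.last k) :=
        Fin.le_def.mp (x.1.2.1.monotone (Fin.le_last i))
      have h2 : (x.1.1.2 (Fin.last k) : ℕ) ≠ n := fun h => x.2 (Fin.ext h)
      have hlt := (x.1.1.2 (Fin.last k)).isLt
      omega
    ⟨(fun i => ⟨(x.1.1.1 i : ℕ), lt_trans (Fin.lt_def.mp (x.1.2.2 i)) (hb i)⟩,
      fun i => ⟨(x.1.1.2 i : ℕ), hb i⟩),
     fun i j hij => Fin.mk_lt_mk.mpr (Fin.lt_def.mp (x.1.2.1 hij)),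
     fun i => Fin.mk_lt_mk.mpr (Fin.lt_def.mp (x.1.2.2 i))⟩
  invFun y :=
    ⟨⟨(fun i => ⟨(y.1.1 i : ℕ), by have := (y.1.1 i).isLt; omega⟩,
       fun i => ⟨(y.1.2 i : ℕ), by have := (y.1.2 i).isLt; omega⟩),
      fun i j hij => Fin.mk_lt_mk.mpr (Fin.lt_def.mp (y.2.1 hij)),
      fun i => Fin.mk_lt_mk.mpr (Fin.lt_def.mp (y.2.2 i))⟩,
     fun h => by
      have hv : ((y.1.2 (Fin.last k) : ℕ)) = n := congrArg Fin.val h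
      have h2 := (y.1.2 (Fin.last k)).isLt
      omega⟩
  left_inv x := by
    apply Subtype.ext; apply Subtype.ext
    apply Prod.ext <;> funext i <;> apply Fin.ext <;> rfl
  right_inv y := by
    apply Subtype.ext
    apply Prod.ext <;> funext i <;> apply Fin.ext <;> rfl

lemma card_split {α : Type*} [Fintype α] (P : α → Prop) :
    Nat.card α = Nat.card {x // P x} + Nat.card {x // ¬ P x} := by
  classical
  rw [← Nat.card_sum]
  exact Nat.card_congr (Equiv.sumCompl P).symm

lemma Ac_succ_succ (n k : ℕ) : Ac (n+1) (k+1) = (n+1) * Ac (n+1) k + Ac n (k+1) := by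
  classical
  unfold Ac
  rw [card_split (fun x : {ab // WPcond (n+1) (k+1) ab} =>
    x.1.2 (Fin.last k) = Fin.last n)]
  congr 1
  · rw [Nat.card_congr (wpE1 n k), Nat.card_prod]
    simp [Nat.card_eq_fintype_card]
  · exact Nat.card_congr (wpE2 n k)

lemma Bc_succ_succ (n k : ℕ) : Bc (n+1) (k+1) = n * Bc n k + Bc n (k+1) := by
  classical
  unfold Bc
  rw [card_split (fun x : {ab // SPcond (n+1) (k+1) ab} =>
    x.1.2 (Fin.last k) = Fin.last n)]
  congr 1
  · rw [Nat.card_congr (spE1 n k), Nat.card_prod]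
    simp [Nat.card_eq_fintype_card]
  · exact Nat.card_congr (spE2 n k)

lemma Ac_zero (n : ℕ) : Ac n 0 = 1 := by
  haveI : Nonempty {ab // WPcond n 0 ab} :=
    ⟨⟨(fun i => i.elim0, fun i => i.elim0), fun i _ _ => i.elim0, fun i => i.elim0⟩⟩
  haveI : Subsingleton {ab // WPcond n 0 ab} :=
    ⟨fun a b => Subtype.ext (Prod.ext (funext fun i => i.elim0) (funext fun i => i.elim0))⟩
  exact Nat.card_unique

lemma Bc_zero (n : ℕ) : Bc n 0 = 1 := by
  haveI : Nonempty {ab // SPcond n 0 ab} :=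
    ⟨⟨(fun i => i.elim0, fun i => i.elim0), fun i _ _ => i.elim0, fun i => i.elim0⟩⟩
  haveI : Subsingleton {ab // SPcond n 0 ab} :=
    ⟨fun a b => Subtype.ext (Prod.ext (funext fun i => i.elim0) (funext fun i => i.elim0))⟩
  exact Nat.card_unique

lemma Ac_of_zero (k : ℕ) : Ac 0 (k+1) = 0 := by
  haveI : IsEmpty {ab // WPcond 0 (k+1) ab} := ⟨fun x => (x.1.2 0).elim0⟩
  exact Nat.card_of_isEmpty

lemma Bc_of_zero (k : ℕ) : Bc 0 (k+1) = 0 := by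
  haveI : IsEmpty {ab // SPcond 0 (k+1) ab} := ⟨fun x => (x.1.2 0).elim0⟩
  exact Nat.card_of_isEmpty

def pairEquiv (n k : ℕ) : (Fin k × Fin 2 → Fin n) ≃ ((Fin k → Fin n) × (Fin k → Fin n)) where
  toFun f := (fun i => f (i, 0), fun i => f (i, 1))
  invFun ab p := if p.2 = 0 then ab.1 p.1 else ab.2 p.1
  left_inv f := by
    funext p
    rcases p with ⟨i, j⟩
    fin_cases j <;> simp
  right_inv ab := by
    apply Prod.ext <;> funext i <;> simp

lemma weak_iff {n k : ℕ} (f : Fin k × Fin 2 → Fin n) :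
    (∀ a b : Fin k × Fin 2, gesselLE k a b → f a ≤ f b) ↔ WPcond n k (pairEquiv n k f) := by
  constructor
  · intro h
    refine ⟨fun i j hij => ?_, fun i => ?_⟩
    · rcases eq_or_lt_of_le hij with h' | h'
      · subst h'; exact le_refl _
      · exact h (i, 1) (j, 1) (Or.inr (Or.inr ⟨rfl, rfl, h'⟩))
    · exact h (i, 0) (i, 1) (Or.inr (Or.inl ⟨rfl, rfl, le_refl i⟩))
  · rintro ⟨hm, hab⟩ ⟨a1, a2⟩ ⟨b1, b2⟩ hle
    rcases hle with h | ⟨h0, h1, hle⟩ | ⟨h0, h1, hlt⟩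
    · exact le_of_eq (congrArg f h)
    · simp only at h0 h1; subst h0; subst h1
      exact le_trans (hab a1) (hm hle)
    · simp only at h0 h1; subst h0; subst h1
      exact hm hlt.le

lemma strict_iff {n k : ℕ} (g : Fin k × Fin 2 → Fin n) :
    (∀ a b : Fin k × Fin 2, gesselLE k a b ∧ a ≠ b → g a < g b) ↔
      SPcond n k (pairEquiv n k g) := by
  constructor
  · intro h
    refine ⟨fun i j hij => ?_, fun i => ?_⟩
    · exact h (i, 1) (j, 1) ⟨Or.inr (Or.inr ⟨rfl, rfl, hij⟩),
        fun he => absurd (congrArg Prod.fst he) hij.ne⟩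
    · exact h (i, 0) (i, 1) ⟨Or.inr (Or.inl ⟨rfl, rfl, le_refl i⟩), by simp⟩
  · rintro ⟨hm, hab⟩ ⟨a1, a2⟩ ⟨b1, b2⟩ ⟨hle, hne⟩
    rcases hle with h | ⟨h0, h1, hle⟩ | ⟨h0, h1, hlt⟩
    · exact absurd h hne
    · simp only at h0 h1; subst h0; subst h1
      exact lt_of_lt_of_le (hab a1) (hm.monotone hle)
    · simp only at h0 h1; subst h0; subst h1
      exact hm hlt

lemma card_weak (n k : ℕ) :
    Nat.card {f : Fin k × Fin 2 → Fin n //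
      ∀ a b : Fin k × Fin 2, gesselLE k a b → f a ≤ f b} = Ac n k :=
  Nat.card_congr (Equiv.subtypeEquiv (pairEquiv n k) (fun f => weak_iff f))

lemma card_strict (n k : ℕ) :
    Nat.card {g : Fin k × Fin 2 → Fin n //
      ∀ a b : Fin k × Fin 2, gesselLE k a b ∧ a ≠ b → g a < g b} = Bc n k :=
  Nat.card_congr (Equiv.subtypeEquiv (pairEquiv n k) (fun g => strict_iff g))

section Partitions

variable {m : ℕ}

def IsPart {m : ℕ} (r : ℕ) (P : Finset (Finset (Fin m))) : Prop :=
  P.card = r ∧ (∀ s ∈ P, s.Nonempty) ∧ ∀ x : Fin m, ∃! s, s ∈ P ∧ x ∈ s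

noncomputable def Sc (m r : ℕ) : ℕ := Nat.card {P : Finset (Finset (Fin m)) // IsPart r P}

/-- lift a subset of `Fin m` into `Fin (m+1)` -/
def upS (t : Finset (Fin m)) : Finset (Fin (m+1)) := t.image Fin.castSucc

/-- restrict a subset of `Fin (m+1)` to `Fin m` -/
def downS (s : Finset (Fin (m+1))) : Finset (Fin m) :=
  univ.filter (fun i => i.castSucc ∈ s)

lemma mem_downS {s : Finset (Fin (m+1))} {i : Fin m} : i ∈ downS s ↔ i.castSucc ∈ s := by
  simp [downS]

lemma mem_upS {t : Finset (Fin m)} {j : Fin (m+1)} :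
    j ∈ upS t ↔ ∃ i ∈ t, i.castSucc = j := by simp [upS]

lemma last_not_mem_upS {t : Finset (Fin m)} : Fin.last m ∉ upS t := by
  rw [mem_upS]
  rintro ⟨i, _, hi⟩
  exact absurd hi (Fin.castSucc_lt_last i).ne

lemma upS_injective : Function.Injective (upS (m := m)) :=
  fun s t h => Finset.image_injective (Fin.castSucc_injective m) h

lemma downS_upS (t : Finset (Fin m)) : downS (upS t) = t := by
  ext i
  simp [mem_downS, mem_upS, (Fin.castSucc_injective m).eq_iff]

lemma upS_downS {s : Finset (Fin (m+1))} (h : Fin.last m ∉ s) : upS (downS s) = s := by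
  ext j
  rw [mem_upS]
  constructor
  · rintro ⟨i, hi, rfl⟩; exact mem_downS.mp hi
  · intro hj
    induction j using Fin.lastCases with
    | last => exact absurd hj h
    | cast i => exact ⟨i, mem_downS.mpr hj, rfl⟩

lemma downS_insert_last (s : Finset (Fin (m+1))) :
    downS (insert (Fin.last m) s) = downS s := by
  ext i
  simp only [mem_downS, mem_insert]
  exact ⟨fun h => h.resolve_left (Fin.castSucc_lt_last i).ne, Or.inr⟩

lemma downS_nonempty {s : Finset (Fin (m+1))} (hne : s.Nonempty)
    (hs : s ≠ {Fin.last m}) : (downS s).Nonempty := by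
  by_contra h
  apply hs
  rw [not_nonempty_iff_eq_empty] at h
  ext j
  rw [mem_singleton]
  constructor
  · intro hj
    induction j using Fin.lastCases with
    | last => rfl
    | cast i =>
      exact absurd (mem_downS.mpr hj) (by simp [h])
  · rintro rfl
    obtain ⟨j, hj⟩ := hne
    have : j = Fin.last m := by
      induction j using Fin.lastCases with
      | last => rfl
      | cast i => exact absurd (mem_downS.mpr hj) (by simp [h])
    rwa [this] at hj

/-- uniqueness of blocks -/
lemma IsPart.block_eq {r : ℕ} {P : Finset (Finset (Fin m))} (h : IsPart r P)
    {s t : Finset (Fin m)} {x : Fin m} (hs : s ∈ P) (ht : t ∈ P) (hxs : x ∈ s)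
    (hxt : x ∈ t) : s = t := by
  obtain ⟨u, _, hu⟩ := h.2.2 x
  rw [hu s ⟨hs, hxs⟩, hu t ⟨ht, hxt⟩]

end Partitions

section CaseA
variable {m r : ℕ}

lemma erase_no_last {P : Finset (Finset (Fin (m+1)))} (h : IsPart (r+1) P)
    (hL : ({Fin.last m} : Finset (Fin (m+1))) ∈ P) {s : Finset (Fin (m+1))}
    (hs : s ∈ P.erase {Fin.last m}) : Fin.last m ∉ s := by
  intro hlast
  have := h.block_eq (mem_of_mem_erase hs) hL hlast (mem_singleton_self _)
  exact (ne_of_mem_erase hs) this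

/-- case A: partitions of Fin (m+1) into r+1 blocks having the singleton {last} -/
noncomputable def caseA (m r : ℕ) :
    {x : {P : Finset (Finset (Fin (m+1))) // IsPart (r+1) P} //
        ({Fin.last m} : Finset (Fin (m+1))) ∈ x.1} ≃
      {P : Finset (Finset (Fin m)) // IsPart r P} where
  toFun x := by
    obtain ⟨⟨P, hP⟩, hL⟩ := x
    refine ⟨(P.erase {Fin.last m}).image downS, ?_, ?_, ?_⟩
    · have hinj : Set.InjOn (downS (m := m)) ↑(P.erase ({Fin.last m} : Finset (Fin (m+1)))) := by
        intro s hs t ht hst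
        rw [← upS_downS (erase_no_last hP hL (mem_coe.mp hs)),
          ← upS_downS (erase_no_last hP hL (mem_coe.mp ht)), hst]
      rw [Finset.card_image_of_injOn hinj, card_erase_of_mem hL, hP.1]; omega
    · intro t ht
      obtain ⟨s, hs, rfl⟩ := mem_image.mp ht
      exact downS_nonempty (hP.2.1 s (mem_of_mem_erase hs)) (ne_of_mem_erase hs)
    · intro i
      obtain ⟨s, ⟨hsP, his⟩, hu⟩ := hP.2.2 i.castSucc
      have hsne : s ≠ {Fin.last m} := by
        rintro rfl
        exact (Fin.castSucc_lt_last i).ne (mem_singleton.mp his)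
      refine ⟨downS s, ⟨mem_image_of_mem _ (mem_erase.mpr ⟨hsne, hsP⟩), mem_downS.mpr his⟩, ?_⟩
      rintro t ⟨htP, hit⟩
      obtain ⟨s', hs', rfl⟩ := mem_image.mp htP
      rw [hu s' ⟨mem_of_mem_erase hs', mem_downS.mp hit⟩]
  invFun y := by
    obtain ⟨P, hP⟩ := y
    refine ⟨⟨insert {Fin.last m} (P.image upS), ?_, ?_, ?_⟩, mem_insert_self _ _⟩
    · rw [card_insert_of_notMem, Finset.card_image_of_injective _ upS_injective, hP.1]
      intro hmem
      obtain ⟨t, _, ht⟩ := mem_image.mp hmem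
      exact last_not_mem_upS (ht ▸ mem_singleton_self _)
    · intro s hs
      rcases mem_insert.mp hs with rfl | hs'
      · exact ⟨_, mem_singleton_self _⟩
      · obtain ⟨t, htP, rfl⟩ := mem_image.mp hs'
        exact (hP.2.1 t htP).image _
    · intro x
      induction x using Fin.lastCases with
      | last =>
        refine ⟨{Fin.last m}, ⟨mem_insert_self _ _, mem_singleton_self _⟩, ?_⟩
        rintro t ⟨htP, hlt⟩
        rcases mem_insert.mp htP with rfl | ht'
        · rfl
        · obtain ⟨u, _, rfl⟩ := mem_image.mp ht'
          exact absurd hlt last_not_mem_upS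
      | cast i =>
        obtain ⟨t, ⟨htP, hit⟩, hu⟩ := hP.2.2 i
        refine ⟨upS t, ⟨mem_insert_of_mem (mem_image_of_mem _ htP),
          mem_upS.mpr ⟨i, hit, rfl⟩⟩, ?_⟩
        rintro t' ⟨ht'P, hit'⟩
        rcases mem_insert.mp ht'P with rfl | ht''
        · exact absurd (mem_singleton.mp hit') (Fin.castSucc_lt_last i).ne
        · obtain ⟨u, huP, rfl⟩ := mem_image.mp ht''
          obtain ⟨i', hi', hii⟩ := mem_upS.mp hit'
          have : i' = i := Fin.castSucc_injective m hii
          subst this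
          rw [hu u ⟨huP, hi'⟩]
  left_inv x := by
    obtain ⟨⟨P, hP⟩, hL⟩ := x
    apply Subtype.ext; apply Subtype.ext
    show insert {Fin.last m} (((P.erase {Fin.last m}).image downS).image upS) = P
    rw [Finset.image_image]
    rw [show (P.erase {Fin.last m}).image (upS ∘ downS) = P.erase {Fin.last m} from ?_]
    · exact insert_erase hL
    · refine Finset.image_congr ?_ |>.trans Finset.image_id
      intro s hs
      exact upS_downS (erase_no_last hP hL hs)
  right_inv y := by
    obtain ⟨P, hP⟩ := y
    apply Subtype.ext
    show ((insert {Fin.last m} (P.image upS)).erase {Fin.last m}).image downS = P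
    rw [Finset.erase_insert, Finset.image_image]
    · refine (Finset.image_congr ?_).trans Finset.image_id
      intro s hs
      exact downS_upS s
    · intro hmem
      obtain ⟨t, _, ht⟩ := mem_image.mp hmem
      exact last_not_mem_upS (ht ▸ mem_singleton_self _)

end CaseA

section CaseB
variable {m r : ℕ}

lemma downS_ne_empty {P : Finset (Finset (Fin (m+1)))} (hP : IsPart (r+1) P)
    (hL : ({Fin.last m} : Finset (Fin (m+1))) ∉ P) {s : Finset (Fin (m+1))}
    (hs : s ∈ P) : (downS s).Nonempty :=
  downS_nonempty (hP.2.1 s hs) (fun h => hL (h ▸ hs))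

lemma downS_injOn {P : Finset (Finset (Fin (m+1)))} (hP : IsPart (r+1) P)
    (hL : ({Fin.last m} : Finset (Fin (m+1))) ∉ P) {s t : Finset (Fin (m+1))}
    (hs : s ∈ P) (ht : t ∈ P) (hst : downS s = downS t) : s = t := by
  obtain ⟨i, hi⟩ := downS_ne_empty hP hL hs
  have his : i.castSucc ∈ s := mem_downS.mp hi
  have hit : i.castSucc ∈ t := mem_downS.mp (hst ▸ hi)
  exact hP.block_eq hs ht his hit

lemma mem_castSucc_insert_last {s : Finset (Fin m)} {i : Fin m} :
    i.castSucc ∈ insert (Fin.last m) (upS s) ↔ i ∈ s := by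
  rw [mem_insert, mem_upS]
  constructor
  · rintro (h | ⟨i', hi', hii⟩)
    · exact absurd h (Fin.castSucc_lt_last i).ne
    · rwa [← Fin.castSucc_injective m hii]
  · intro h; exact Or.inr ⟨i, h, rfl⟩

/-- case B: partitions of Fin (m+1) into r+1 blocks, no singleton {last} -/
noncomputable def caseB (m r : ℕ) :
    {x : {P : Finset (Finset (Fin (m+1))) // IsPart (r+1) P} //
        ({Fin.last m} : Finset (Fin (m+1))) ∉ x.1} ≃
      {Ps : Finset (Finset (Fin m)) × Finset (Fin m) //
        IsPart (r+1) Ps.1 ∧ Ps.2 ∈ Ps.1} where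
  toFun x := by
    obtain ⟨⟨P, hP⟩, hL⟩ := x
    have hL' : ({Fin.last m} : Finset (Fin (m+1))) ∉ P := hL
    refine ⟨(P.image downS, downS (Finset.choose (fun s => Fin.last m ∈ s) P (hP.2.2 _))),
      ⟨?_, ?_, ?_⟩, mem_image_of_mem _ (Finset.choose_mem _ _ _)⟩
    · rw [Finset.card_image_of_injOn (fun s hs t ht => downS_injOn hP hL' (mem_coe.mp hs)
        (mem_coe.mp ht)), hP.1]
    · intro t ht
      obtain ⟨s, hs, rfl⟩ := mem_image.mp ht
      exact downS_ne_empty hP hL' hs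
    · intro i
      obtain ⟨s, ⟨hsP, his⟩, hu⟩ := hP.2.2 i.castSucc
      refine ⟨downS s, ⟨mem_image_of_mem _ hsP, mem_downS.mpr his⟩, ?_⟩
      rintro t ⟨htP, hit⟩
      obtain ⟨s', hs', rfl⟩ := mem_image.mp htP
      rw [hu s' ⟨hs', mem_downS.mp hit⟩]
  invFun y := by
    obtain ⟨⟨P, s⟩, ⟨hP, hs⟩⟩ := y
    refine ⟨⟨insert (insert (Fin.last m) (upS s)) ((P.erase s).image upS), ?_, ?_, ?_⟩, ?_⟩
    · rw [card_insert_of_notMem, Finset.card_image_of_injective _ upS_injective,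
        card_erase_of_mem hs, hP.1]
      · omega
      · intro hmem
        obtain ⟨t, _, ht⟩ := mem_image.mp hmem
        exact last_not_mem_upS (ht ▸ mem_insert_self _ _)
    · intro t ht
      rcases mem_insert.mp ht with rfl | ht'
      · exact ⟨_, mem_insert_self _ _⟩
      · obtain ⟨u, huP, rfl⟩ := mem_image.mp ht'
        exact (hP.2.1 u (mem_of_mem_erase huP)).image _
    · intro x
      induction x using Fin.lastCases with
      | last =>
        refine ⟨insert (Fin.last m) (upS s), ⟨mem_insert_self _ _, mem_insert_self _ _⟩, ?_⟩
        rintro t ⟨htP, hlt⟩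
        rcases mem_insert.mp htP with rfl | ht'
        · rfl
        · obtain ⟨u, _, rfl⟩ := mem_image.mp ht'
          exact absurd hlt last_not_mem_upS
      | cast i =>
        obtain ⟨t, ⟨htP, hit⟩, hu⟩ := hP.2.2 i
        by_cases hts : t = s
        · subst hts
          refine ⟨insert (Fin.last m) (upS t), ⟨mem_insert_self _ _,
            mem_castSucc_insert_last.mpr hit⟩, ?_⟩
          rintro t' ⟨ht'P, hit'⟩
          rcases mem_insert.mp ht'P with rfl | ht''
          · rfl
          · obtain ⟨u, huP, rfl⟩ := mem_image.mp ht''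
            obtain ⟨i', hi', hii⟩ := mem_upS.mp hit'
            have hieq : i' = i := Fin.castSucc_injective m hii
            subst hieq
            exact absurd (hu u ⟨mem_of_mem_erase huP, hi'⟩ ▸ huP)
              (fun hc => (ne_of_mem_erase hc) rfl)
        · refine ⟨upS t, ⟨mem_insert_of_mem (mem_image_of_mem _ (mem_erase.mpr ⟨hts, htP⟩)),
            mem_upS.mpr ⟨i, hit, rfl⟩⟩, ?_⟩
          rintro t' ⟨ht'P, hit'⟩
          rcases mem_insert.mp ht'P with rfl | ht''
          · exact absurd (hu s ⟨hs, mem_castSucc_insert_last.mp hit'⟩) (Ne.symm hts)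
          · obtain ⟨u, huP, rfl⟩ := mem_image.mp ht''
            obtain ⟨i', hi', hii⟩ := mem_upS.mp hit'
            have hieq : i' = i := Fin.castSucc_injective m hii
            subst hieq
            rw [hu u ⟨mem_of_mem_erase huP, hi'⟩]
    · intro hmem
      rcases mem_insert.mp hmem with h | h
      · obtain ⟨j, hj⟩ := hP.2.1 s hs
        have : j.castSucc ∈ ({Fin.last m} : Finset (Fin (m+1))) := by
          rw [h]; exact mem_castSucc_insert_last.mpr hj
        exact absurd (mem_singleton.mp this) (Fin.castSucc_lt_last j).ne
      · obtain ⟨t, _, ht⟩ := mem_image.mp h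
        exact last_not_mem_upS (ht ▸ mem_singleton_self _)
  left_inv x := by
    obtain ⟨⟨P, hP⟩, hL⟩ := x
    have hL' : ({Fin.last m} : Finset (Fin (m+1))) ∉ P := hL
    apply Subtype.ext; apply Subtype.ext
    set B := Finset.choose (fun s => Fin.last m ∈ s) P (hP.2.2 _) with hB
    have hBP : B ∈ P := Finset.choose_mem _ _ _
    have hlastB : Fin.last m ∈ B :=
      Finset.choose_property (fun s => Fin.last m ∈ s) P (hP.2.2 _)
    show insert (insert (Fin.last m) (upS (downS B)))
      (((P.image downS).erase (downS B)).image upS) = P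
    have h1 : insert (Fin.last m) (upS (downS B)) = B := by
      ext j
      induction j using Fin.lastCases with
      | last => simp [hlastB]
      | cast i => rw [mem_castSucc_insert_last, mem_downS]
    have h2 : (P.image downS).erase (downS B) = (P.erase B).image downS := by
      ext t
      simp only [mem_erase, mem_image]
      constructor
      · rintro ⟨hne, s, hsP, rfl⟩
        exact ⟨s, ⟨fun h => hne (by rw [h]), hsP⟩, rfl⟩
      · rintro ⟨s, ⟨hsne, hsP⟩, rfl⟩
        exact ⟨fun h => hsne (downS_injOn hP hL' hsP hBP h), s, hsP, rfl⟩
    have h3 : ((P.erase B).image downS).image upS = P.erase B := by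
      rw [Finset.image_image]
      refine (Finset.image_congr ?_).trans Finset.image_id
      intro s hs
      refine upS_downS ?_
      intro hlast
      exact (ne_of_mem_erase (mem_coe.mp hs))
        (hP.block_eq (mem_of_mem_erase (mem_coe.mp hs)) hBP hlast hlastB)
    rw [h1, h2, h3, insert_erase hBP]
  right_inv y := by
    obtain ⟨⟨P, s⟩, hP, hs⟩ := y
    apply Subtype.ext
    set Q := insert (insert (Fin.last m) (upS s)) ((P.erase s).image upS) with hQdef
    have key : ∀ (hpf : ∃! t, t ∈ Q ∧ Fin.last m ∈ t),
        downS (Finset.choose (fun t => Fin.last m ∈ t) Q hpf) = s := by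
      intro hpf
      have hch : Finset.choose (fun t => Fin.last m ∈ t) Q hpf
          = insert (Fin.last m) (upS s) :=
        hpf.unique ⟨Finset.choose_mem _ _ _,
          Finset.choose_property (fun t => Fin.last m ∈ t) Q hpf⟩
          ⟨mem_insert_self _ _, mem_insert_self _ _⟩
      rw [hch, downS_insert_last, downS_upS]
    apply Prod.ext
    · show Q.image downS = P
      rw [hQdef, Finset.image_insert, downS_insert_last, downS_upS,
        Finset.image_image]
      rw [show ((P.erase s).image (downS ∘ upS)) = P.erase s from
        (Finset.image_congr (fun t _ => downS_upS t)).trans Finset.image_id]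
      exact insert_erase hs
    · exact key _

end CaseB

lemma card_split' {α : Type*} [Fintype α] (P : α → Prop) :
    Nat.card α = Nat.card {x // P x} + Nat.card {x // ¬ P x} := by
  classical
  rw [← Nat.card_sum]
  exact Nat.card_congr (Equiv.sumCompl P).symm

def pairToSigma (m r : ℕ) :
    {Ps : Finset (Finset (Fin m)) × Finset (Fin m) //
        IsPart (r+1) Ps.1 ∧ Ps.2 ∈ Ps.1} ≃
      Σ P : {P : Finset (Finset (Fin m)) // IsPart (r+1) P}, {s // s ∈ P.1} where
  toFun x := ⟨⟨x.1.1, x.2.1⟩, ⟨x.1.2, x.2.2⟩⟩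
  invFun y := ⟨(y.1.1, y.2.1), y.1.2, y.2.2⟩
  left_inv x := rfl
  right_inv y := rfl

lemma Sc_card_pairs (m r : ℕ) :
    Nat.card {Ps : Finset (Finset (Fin m)) × Finset (Fin m) //
      IsPart (r+1) Ps.1 ∧ Ps.2 ∈ Ps.1} = (r+1) * Sc m (r+1) := by
  classical
  rw [Nat.card_congr (pairToSigma m r), Nat.card_eq_fintype_card, Fintype.card_sigma]
  have h1 : ∀ P : {P : Finset (Finset (Fin m)) // IsPart (r+1) P},
      Fintype.card {s // s ∈ P.1} = r + 1 := by
    intro P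
    rw [Fintype.card_of_subtype P.1 (fun x => Iff.rfl), P.2.1]
  rw [Finset.sum_congr rfl (fun P _ => h1 P), Finset.sum_const, smul_eq_mul]
  have : Sc m (r+1) = (univ : Finset {P : Finset (Finset (Fin m)) // IsPart (r+1) P}).card := by
    rw [Sc, Nat.card_eq_fintype_card, Fintype.card]
  rw [this, Nat.mul_comm]

lemma Sc_rec (m r : ℕ) : Sc (m+1) (r+1) = Sc m r + (r+1) * Sc m (r+1) := by
  classical
  rw [show Sc (m+1) (r+1) = Nat.card {P : Finset (Finset (Fin (m+1))) // IsPart (r+1) P} from rfl]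
  rw [card_split' (fun x : {P : Finset (Finset (Fin (m+1))) // IsPart (r+1) P} =>
    ({Fin.last m} : Finset (Fin (m+1))) ∈ x.1)]
  congr 1
  · exact Nat.card_congr (caseA m r)
  · rw [Nat.card_congr (caseB m r)]
    exact Sc_card_pairs m r

lemma Sc_zero_zero : Sc 0 0 = 1 := by
  haveI : Nonempty {P : Finset (Finset (Fin 0)) // IsPart 0 P} :=
    ⟨⟨∅, card_empty, fun s hs => absurd hs (notMem_empty s), fun x => x.elim0⟩⟩
  haveI : Subsingleton {P : Finset (Finset (Fin 0)) // IsPart 0 P} :=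
    ⟨fun a b => Subtype.ext (by rw [card_eq_zero.mp a.2.1, card_eq_zero.mp b.2.1])⟩
  exact Nat.card_unique

lemma Sc_succ_zero (m : ℕ) : Sc (m+1) 0 = 0 := by
  haveI : IsEmpty {P : Finset (Finset (Fin (m+1))) // IsPart 0 P} := by
    refine ⟨fun x => ?_⟩
    obtain ⟨s, ⟨hs, _⟩, _⟩ := x.2.2.2 0
    rw [card_eq_zero.mp x.2.1] at hs
    exact absurd hs (notMem_empty s)
  exact Nat.card_of_isEmpty

lemma Sc_gt (m r : ℕ) (h : m < r) : Sc m r = 0 := by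
  classical
  haveI : IsEmpty {P : Finset (Finset (Fin m)) // IsPart r P} := by
    refine ⟨fun x => ?_⟩
    obtain ⟨P, hP⟩ := x
    rcases P.eq_empty_or_nonempty with rfl | ⟨s, hs⟩
    · rw [← hP.1] at h; simp at h
    · haveI : Nonempty (Fin m) := ⟨(hP.2.1 s hs).choose⟩
      have hle : P.card ≤ m := by
        have := Finset.card_le_card_of_injOn (s := P) (t := univ)
          (fun t : Finset (Fin m) => if h : t.Nonempty then h.choose else Classical.arbitrary (Fin m))
          (fun t _ => mem_univ _) ?_
        · simpa using this
        · intro t1 h1 t2 h2 heq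
          have hn1 := hP.2.1 t1 (mem_coe.mp h1)
          have hn2 := hP.2.1 t2 (mem_coe.mp h2)
          simp only [] at heq
          rw [dif_pos hn1, dif_pos hn2] at heq
          exact hP.block_eq (mem_coe.mp h1) (mem_coe.mp h2)
            (heq ▸ hn1.choose_spec) hn2.choose_spec
      rw [hP.1] at hle; omega
  exact Nat.card_of_isEmpty

lemma Sc_diag : ∀ n, Sc n n = 1 := by
  intro n
  induction n with
  | zero => exact Sc_zero_zero
  | succ n ih => rw [Sc_rec, ih, Sc_gt n (n+1) (Nat.lt_succ_self n)]; ring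

section Cycles
variable {α : Type*} [Fintype α] [DecidableEq α]

/-- number of fixed points, as a Finset card -/
def fixc (σ : Perm α) : ℕ := (univ.filter fun z => σ z = z).card

lemma natCard_fix (σ : Perm α) : Nat.card {z // σ z = z} = fixc σ := by
  rw [Nat.card_eq_fintype_card, Fintype.card_subtype, fixc]

lemma fixc_add_support (σ : Perm α) :
    fixc σ + σ.support.card = Fintype.card α := by
  have : σ.support = univ.filter fun x => ¬ σ x = x := rfl
  rw [fixc, this, Finset.card_filter_add_card_filter_not, card_univ]

lemma support_swap_mul_cycle {c : Perm α} {x y : α} (hx : x ∉ c.support)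
    (hy : y ∈ c.support) : (swap x y * c).support = insert x c.support := by
  have hxy : x ≠ y := fun h => hx (h ▸ hy)
  have hcx : c x = x := notMem_support.mp hx
  ext z
  simp only [mem_support, mem_insert, mul_apply]
  by_cases hz : z = x
  · subst hz
    simp [hcx, Ne.symm hxy]
  · have hczx : c z ≠ x := fun h => hz (c.injective (h.trans hcx.symm))
    by_cases hcz : c z = y
    · have hzy : z ≠ y := fun h => (mem_support.mp hy) (h ▸ hcz)
      rw [hcz, swap_apply_right]
      exact ⟨fun _ => Or.inr (fun h => hzy h.symm), fun _ => Ne.symm hz⟩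
    · rw [swap_apply_of_ne_of_ne hczx hcz]
      exact ⟨fun h => Or.inr h, fun h => h.resolve_left hz⟩

lemma isCycle_swap_mul_cycle {c : Perm α} (hc : c.IsCycle) {x y : α}
    (hx : x ∉ c.support) (hy : y ∈ c.support) : (swap x y * c).IsCycle := by
  have hxy : x ≠ y := fun h => hx (h ▸ hy)
  have hcx : c x = x := notMem_support.mp hx
  have hgx : (swap x y * c) x = y := by
    rw [mul_apply, hcx, swap_apply_left]
  have key : ∀ i : ℕ, (swap x y * c).SameCycle x ((c ^ i) y) := by
    intro i
    induction i with
    | zero => exact ⟨1, by simpa using hgx⟩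
    | succ i ih =>
      by_cases h : (c ^ (i+1)) y = y
      · rw [h]; exact ⟨1, by simpa using hgx⟩
      · have hmem : (c ^ (i+1)) y ∈ c.support := pow_apply_mem_support.mpr hy
        have hne_x : (c ^ (i+1)) y ≠ x := fun hh => hx (hh ▸ hmem)
        have step : (swap x y * c) ((c ^ i) y) = (c ^ (i+1)) y := by
          rw [mul_apply]
          have hcc : c ((c ^ i) y) = (c ^ (i+1)) y := by
            rw [← Equiv.Perm.mul_apply, ← pow_succ']
          rw [hcc, swap_apply_of_ne_of_ne hne_x h]
        exact ih.trans ⟨1, by simpa using step⟩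
  refine ⟨x, by rw [hgx]; exact Ne.symm hxy, fun b hb => ?_⟩
  by_cases hbx : b = x
  · subst hbx; exact ⟨0, rfl⟩
  · have hbsup : b ∈ c.support := by
      have hmem : b ∈ insert x c.support := by
        rw [← support_swap_mul_cycle hx hy]
        exact mem_support.mpr hb
      exact (mem_insert.mp hmem).resolve_left hbx
    obtain ⟨i, hi⟩ := hc.exists_pow_eq (mem_support.mp hy) (mem_support.mp hbsup)
    exact hi ▸ key i

lemma ncyc_swap_mul {σ : Perm α} {x y : α} (hx : σ x = x) (hxy : x ≠ y) :
    Multiset.card (swap x y * σ).cycleType + fixc (swap x y * σ) + 1 =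
      Multiset.card σ.cycleType + fixc σ := by
  by_cases hσy : σ y = y
  · -- y is also a fixed point : swap is a new 2-cycle
    have hdisj : (swap x y).Disjoint σ := by
      intro z
      by_cases hzx : z = x
      · exact Or.inr (hzx ▸ hx)
      · by_cases hzy : z = y
        · exact Or.inr (hzy ▸ hσy)
        · exact Or.inl (swap_apply_of_ne_of_ne hzx hzy)
    have hct : Multiset.card (swap x y * σ).cycleType = Multiset.card σ.cycleType + 1 := by
      rw [hdisj.cycleType_mul, Multiset.card_add, (isCycle_swap hxy).cycleType]
      simp [Nat.add_comm]
    have hfix : fixc (swap x y * σ) + 2 = fixc σ := by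
      have hset : (univ.filter fun z => (swap x y * σ) z = z) =
          ((univ.filter fun z => σ z = z).erase x).erase y := by
        ext z
        simp only [mem_filter, mem_univ, true_and, mem_erase, mul_apply]
        constructor
        · intro h
          by_cases hzx : z = x
          · subst hzx; rw [hx, swap_apply_left] at h; exact absurd h (Ne.symm hxy)
          · by_cases hzy : z = y
            · subst hzy; rw [hσy, swap_apply_right] at h; exact absurd h hxy
            · by_cases h1 : σ z = x
              · rw [h1, swap_apply_left] at h; exact absurd h.symm hzy
              · by_cases h2 : σ z = y
                · rw [h2, swap_apply_right] at h; exact absurd h.symm hzx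
                · rw [swap_apply_of_ne_of_ne h1 h2] at h
                  exact ⟨hzy, hzx, h⟩
        · rintro ⟨hzy, hzx, h⟩
          rw [h, swap_apply_of_ne_of_ne hzx hzy]
      have hyx : y ∈ (univ.filter fun z => σ z = z).erase x :=
        mem_erase.mpr ⟨Ne.symm hxy, mem_filter.mpr ⟨mem_univ _, hσy⟩⟩
      have hxf : x ∈ (univ.filter fun z => σ z = z) := mem_filter.mpr ⟨mem_univ _, hx⟩
      have c1 := card_erase_of_mem hyx
      have hpos1 : 0 < ((univ.filter fun z => σ z = z).erase x).card :=
        card_pos.mpr ⟨y, hyx⟩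
      have hpos2 : 0 < (univ.filter fun z => σ z = z).card :=
        card_pos.mpr ⟨x, hxf⟩
      have c3 := card_erase_of_mem hxf
      rw [fixc, fixc, hset]
      omega
    omega
  · -- y is moved by σ : x is inserted into the cycle of y
    set c := σ.cycleOf y with hcdef
    have hcyc : c.IsCycle := isCycle_cycleOf σ hσy
    have hysup : y ∈ c.support := by
      rw [mem_support, hcdef, cycleOf_apply_self]; exact hσy
    have hxsupσ : x ∉ σ.support := notMem_support.mpr hx
    have hxsup : x ∉ c.support := fun h => hxsupσ (support_cycleOf_le σ y h)
    set τ := σ * c⁻¹ with hτdef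
    have hcinv : ∀ z ∈ c.support, τ z = z := by
      intro z hz
      rw [hcdef] at hz
      obtain ⟨hsc, -⟩ := mem_support_cycleOf_iff.mp hz
      have hscinv : σ.SameCycle y (σ⁻¹ z) := hsc.trans ⟨-1, by simp⟩
      have h1 : c (σ⁻¹ z) = z := by
        rw [hcdef, cycleOf_apply, if_pos hscinv, ← mul_apply σ σ⁻¹, mul_inv_cancel, one_apply]
      have h2 : c⁻¹ z = σ⁻¹ z := by
        apply c.injective
        rw [← mul_apply c c⁻¹, mul_inv_cancel, one_apply, h1]
      rw [hτdef, mul_apply, h2, ← mul_apply σ σ⁻¹, mul_inv_cancel, one_apply]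
    have hdisj : c.Disjoint τ := by
      intro z
      by_cases hz : z ∈ c.support
      · exact Or.inr (hcinv z hz)
      · exact Or.inl (notMem_support.mp hz)
    have hστ : σ = c * τ := by
      rw [hdisj.commute.eq, hτdef, inv_mul_cancel_right]
    have hτsup : τ.support ≤ σ.support := by
      rw [hτdef]
      refine le_trans (support_mul_le σ c⁻¹) ?_
      rw [support_inv]
      exact sup_le le_rfl (le_trans (support_cycleOf_le σ y) le_rfl)
    have hgcyc := isCycle_swap_mul_cycle hcyc hxsup hysup
    have hgsup := support_swap_mul_cycle hxsup hysup
    have hdisj2 : (swap x y * c).Disjoint τ := by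
      intro z
      by_cases hz : τ z = z
      · exact Or.inr hz
      · refine Or.inl (notMem_support.mp ?_)
        rw [hgsup, mem_insert]
        push_neg
        have hzτ : z ∈ τ.support := mem_support.mpr hz
        constructor
        · intro hzx
          exact hxsupσ (hτsup (hzx ▸ hzτ))
        · intro hzc
          exact hz (hcinv z hzc)
    have hmul : swap x y * σ = (swap x y * c) * τ := by
      rw [hστ, mul_assoc]
    have hct : Multiset.card (swap x y * σ).cycleType = Multiset.card σ.cycleType := by
      rw [hmul, hdisj2.cycleType_mul, hστ, hdisj.cycleType_mul, Multiset.card_add,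
        Multiset.card_add, hgcyc.cycleType, hcyc.cycleType]
      simp
    have hfix : fixc (swap x y * σ) + 1 = fixc σ := by
      have hset : (univ.filter fun z => (swap x y * σ) z = z) =
          (univ.filter fun z => σ z = z).erase x := by
        ext z
        simp only [mem_filter, mem_univ, true_and, mem_erase, mul_apply]
        constructor
        · intro h
          by_cases hzx : z = x
          · subst hzx; rw [hx, swap_apply_left] at h; exact absurd h (Ne.symm hxy)
          · by_cases h1 : σ z = x
            · have : z = x := σ.injective (h1.trans hx.symm)
              exact absurd this hzx
            · by_cases h2 : σ z = y
              · rw [h2, swap_apply_right] at h; exact absurd h.symm hzx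
              · rw [swap_apply_of_ne_of_ne h1 h2] at h
                exact ⟨hzx, h⟩
        · rintro ⟨hzx, h⟩
          have hzy : z ≠ y := fun hh => hσy (hh ▸ h)
          rw [h, swap_apply_of_ne_of_ne hzx hzy]
      have hxf : x ∈ (univ.filter fun z => σ z = z) := mem_filter.mpr ⟨mem_univ _, hx⟩
      have c3 := card_erase_of_mem hxf
      have hpos : 0 < (univ.filter fun z => σ z = z).card := card_pos.mpr ⟨x, hxf⟩
      rw [fixc, fixc, hset, c3]
      omega
    omega
end Cycles

section Decompose

noncomputable def ncyc {n : ℕ} (σ : Perm (Fin n)) : ℕ :=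
  Multiset.card σ.cycleType + Nat.card {x // σ x = x}

def finSuccE (n : ℕ) : Fin n ≃ {i : Fin (n+1) // i ≠ 0} where
  toFun i := ⟨i.succ, Fin.succ_ne_zero i⟩
  invFun j := (j.1).pred j.2
  left_inv i := by simp
  right_inv j := Subtype.ext (Fin.succ_pred _ j.2)

lemma decompose_zero_eq {n : ℕ} (e : Perm (Fin n)) :
    Equiv.Perm.decomposeFin.symm (0, e) = e.extendDomain (finSuccE n) := by
  apply Equiv.ext; intro z
  induction z using Fin.cases with
  | zero =>
    rw [Equiv.Perm.decomposeFin_symm_apply_zero,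
      extendDomain_apply_not_subtype _ _ (by simp)]
  | succ i =>
    rw [Equiv.Perm.decomposeFin_symm_apply_succ,
      e.extendDomain_apply_subtype (finSuccE n) (Fin.succ_ne_zero i)]
    simp [finSuccE]

lemma decompose_eq {n : ℕ} (p : Fin (n+1)) (e : Perm (Fin n)) :
    Equiv.Perm.decomposeFin.symm (p, e) =
      swap 0 p * Equiv.Perm.decomposeFin.symm (0, e) := by
  apply Equiv.ext; intro z
  induction z using Fin.cases with
  | zero =>
    rw [Equiv.Perm.decomposeFin_symm_apply_zero, mul_apply,
      Equiv.Perm.decomposeFin_symm_apply_zero, swap_apply_left]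
  | succ i =>
    rw [Equiv.Perm.decomposeFin_symm_apply_succ, mul_apply,
      Equiv.Perm.decomposeFin_symm_apply_succ]
    simp

lemma ncyc_decompose_zero {n : ℕ} (e : Perm (Fin n)) :
    ncyc (Equiv.Perm.decomposeFin.symm (0, e)) = ncyc e + 1 := by
  unfold ncyc
  rw [natCard_fix, natCard_fix]
  have hct : (Equiv.Perm.decomposeFin.symm (0, e)).cycleType = e.cycleType := by
    rw [decompose_zero_eq, cycleType_extendDomain]
  have hfix : fixc (Equiv.Perm.decomposeFin.symm (0, e)) = fixc e + 1 := by
    unfold fixc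
    rw [Fin.univ_succ, Finset.filter_cons, if_pos (by
      rw [Equiv.Perm.decomposeFin_symm_apply_zero])]
    rw [card_cons, Finset.filter_map, card_map]
    congr 1
    apply Finset.card_bij (fun a _ => a) <;> intro a ha
    · simp only [mem_filter, mem_univ, true_and] at ha ⊢
      have := ha
      simpa [Equiv.Perm.decomposeFin_symm_apply_succ, Fin.succ_inj] using this
    · intro b hb h; exact h
    · exact ⟨a, by
        simp only [mem_filter, mem_univ, true_and, Function.comp] at ha ⊢
        simpa [Equiv.Perm.decomposeFin_symm_apply_succ, Fin.succ_inj] using ha, rfl⟩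
  rw [hct, hfix]
  ring

lemma ncyc_decompose {n : ℕ} (p : Fin (n+1)) (e : Perm (Fin n)) :
    ncyc (Equiv.Perm.decomposeFin.symm (p, e)) =
      if p = 0 then ncyc e + 1 else ncyc e := by
  by_cases hp : p = 0
  · rw [if_pos hp, hp, ncyc_decompose_zero]
  · rw [if_neg hp]
    have h0 : (Equiv.Perm.decomposeFin.symm (0, e) : Perm (Fin (n+1))) 0 = 0 :=
      Equiv.Perm.decomposeFin_symm_apply_zero 0 e
    have key := ncyc_swap_mul (σ := Equiv.Perm.decomposeFin.symm (0, e))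
      (x := (0 : Fin (n+1))) (y := p) h0 (Ne.symm hp)
    have hd := decompose_eq p e
    have : ncyc (Equiv.Perm.decomposeFin.symm (p, e)) + 1
        = ncyc (Equiv.Perm.decomposeFin.symm (0, e)) := by
      unfold ncyc
      rw [natCard_fix, natCard_fix, hd]
      omega
    rw [ncyc_decompose_zero] at this
    omega

end Decompose

section CycleCount

noncomputable def Cc (n j : ℕ) : ℕ := Nat.card {σ : Perm (Fin n) // ncyc σ = j}

lemma Cc_rec (n j : ℕ) : Cc (n+1) (j+1) = Cc n j + n * Cc n (j+1) := by
  classical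
  have step1 : Cc (n+1) (j+1) =
      Nat.card {pe : Fin (n+1) × Perm (Fin n) //
        ncyc (Equiv.Perm.decomposeFin.symm pe) = j+1} := by
    refine Nat.card_congr (Equiv.subtypeEquiv Equiv.Perm.decomposeFin (fun σ => ?_))
    rw [Equiv.symm_apply_apply]
  rw [step1]
  rw [Nat.card_congr (Equiv.subtypeProdEquivSigmaSubtype
    (fun (a : Fin (n+1)) (b : Perm (Fin n)) =>
      ncyc (Equiv.Perm.decomposeFin.symm (a, b)) = j+1))]
  rw [Nat.card_eq_fintype_card, Fintype.card_sigma]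
  have hterm : ∀ p : Fin (n+1),
      Fintype.card {e : Perm (Fin n) //
        ncyc (Equiv.Perm.decomposeFin.symm (p, e)) = j+1} =
      if p = 0 then Cc n j else Cc n (j+1) := by
    intro p
    by_cases hp : p = 0
    · subst hp
      rw [if_pos rfl, Cc, Nat.card_eq_fintype_card]
      apply Fintype.card_congr
      refine Equiv.subtypeEquivRight (fun e => ?_)
      rw [ncyc_decompose, if_pos rfl]
      omega
    · rw [if_neg hp, Cc, Nat.card_eq_fintype_card]
      apply Fintype.card_congr
      refine Equiv.subtypeEquivRight (fun e => ?_)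
      rw [ncyc_decompose, if_neg hp]
  rw [Finset.sum_congr rfl (fun p _ => hterm p), Fin.sum_univ_succ]
  rw [if_pos rfl]
  have : ∀ i : Fin n, (if (i.succ : Fin (n+1)) = 0 then Cc n j else Cc n (j+1))
      = Cc n (j+1) := fun i => if_neg (Fin.succ_ne_zero i)
  rw [Finset.sum_congr rfl (fun i _ => this i), Finset.sum_const, card_univ,
    Fintype.card_fin, smul_eq_mul]

lemma Cc_zero_zero : Cc 0 0 = 1 := by
  haveI : Subsingleton (Perm (Fin 0)) := ⟨fun a b => Equiv.ext fun x => x.elim0⟩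
  haveI : Nonempty {σ : Perm (Fin 0) // ncyc σ = 0} := by
    refine ⟨1, ?_⟩
    unfold ncyc
    rw [cycleType_one]
    haveI : IsEmpty {x : Fin 0 // (1 : Perm (Fin 0)) x = x} := ⟨fun x => x.1.elim0⟩
    rw [Nat.card_of_isEmpty]
    simp
  haveI : Subsingleton {σ : Perm (Fin 0) // ncyc σ = 0} :=
    ⟨fun a b => Subtype.ext (Subsingleton.elim _ _)⟩
  exact Nat.card_unique

lemma Cc_succ_zero (n : ℕ) : Cc (n+1) 0 = 0 := by
  haveI : IsEmpty {σ : Perm (Fin (n+1)) // ncyc σ = 0} := by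
    refine ⟨fun x => ?_⟩
    obtain ⟨σ, hσ⟩ := x
    unfold ncyc at hσ
    have h1 : Multiset.card σ.cycleType = 0 := by omega
    have h2 : σ = 1 := card_cycleType_eq_zero.mp h1
    subst h2
    have h3 : Nat.card {x : Fin (n+1) // (1 : Perm (Fin (n+1))) x = x} = 0 := by omega
    haveI : Nonempty {x : Fin (n+1) // (1 : Perm (Fin (n+1))) x = x} := ⟨⟨0, rfl⟩⟩
    have := Nat.card_pos (α := {x : Fin (n+1) // (1 : Perm (Fin (n+1))) x = x})
    omega
  exact Nat.card_of_isEmpty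

lemma multiset_card_le_sum (s : Multiset ℕ) (h : ∀ x ∈ s, 1 ≤ x) :
    Multiset.card s ≤ s.sum := by
  induction s using Multiset.induction with
  | empty => simp
  | cons a s ih =>
    rw [Multiset.card_cons, Multiset.sum_cons]
    have ha : 1 ≤ a := h a (Multiset.mem_cons_self a s)
    have := ih (fun x hx => h x (Multiset.mem_cons_of_mem hx))
    omega

lemma ncyc_le (n : ℕ) (σ : Perm (Fin n)) : ncyc σ ≤ n := by
  unfold ncyc
  rw [natCard_fix]
  have h1 : Multiset.card σ.cycleType ≤ σ.support.card := by
    rw [← sum_cycleType]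
    exact multiset_card_le_sum _ (fun x hx => le_of_lt (one_lt_of_mem_cycleType hx))
  have h2 := fixc_add_support σ
  rw [Fintype.card_fin] at h2
  omega

lemma Cc_gt (n j : ℕ) (h : n < j) : Cc n j = 0 := by
  haveI : IsEmpty {σ : Perm (Fin n) // ncyc σ = j} :=
    ⟨fun x => by have := ncyc_le n x.1; omega⟩
  exact Nat.card_of_isEmpty

lemma Cc_diag : ∀ n, Cc n n = 1 := by
  intro n
  induction n with
  | zero => exact Cc_zero_zero
  | succ n ih => rw [Cc_rec, ih, Cc_gt n (n+1) (Nat.lt_succ_self n)]; ring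

lemma Cc_zero_of_pos (n : ℕ) (h : 1 ≤ n) : Cc n 0 = 0 := by
  obtain ⟨m, rfl⟩ := Nat.exists_eq_add_of_le h
  rw [Nat.add_comm]
  exact Cc_succ_zero m

end CycleCount

lemma Ac_eq : ∀ k n : ℕ, Ac n k = Sc (n+k) n := by
  intro k
  induction k with
  | zero => intro n; rw [Ac_zero, Nat.add_zero, Sc_diag]
  | succ k ih =>
    intro n
    induction n with
    | zero => rw [Ac_of_zero, Nat.zero_add, Sc_succ_zero]
    | succ m ihm =>
      rw [Ac_succ_succ m k, ih (m+1), ihm]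
      have e1 : m + 1 + k = m + k + 1 := by omega
      have e2 : m + 1 + (k + 1) = m + k + 1 + 1 := by omega
      have e3 : m + (k + 1) = m + k + 1 := by omega
      rw [e1, e2, e3, Sc_rec (m+k+1) m]
      ring

lemma Bc_eq : ∀ n : ℕ, 1 ≤ n → ∀ k : ℕ, Bc n k = Cc n (n - k) := by
  intro n
  induction n with
  | zero => intro h; exact absurd h (by omega)
  | succ n ih =>
    intro _ k
    rcases Nat.eq_zero_or_pos n with rfl | hn
    · cases k with
      | zero => rw [Bc_zero, Nat.sub_zero, Cc_diag]
      | succ k =>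
        rw [Bc_succ_succ 0 k, Bc_of_zero k]
        have h1 : Bc 0 k * 0 = 0 := Nat.mul_zero _
        have e : 1 - (k+1) = 0 := by omega
        rw [e, Cc_zero_of_pos 1 (le_refl 1)]
        omega
    · cases k with
      | zero => rw [Bc_zero, Nat.sub_zero, Cc_diag]
      | succ k =>
        rw [Bc_succ_succ n k, ih hn k, ih hn (k+1)]
        by_cases hk : k < n
        · have e0 : n + 1 - (k+1) = n - k := by omega
          have e1 : n - k = n - (k+1) + 1 := by omega
          rw [e0, e1, Cc_rec n (n - (k+1))]
          ring
        · have e1 : n + 1 - (k+1) = 0 := by omega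
          have e2 : n - k = 0 := by omega
          have e3 : n - (k+1) = 0 := by omega
          rw [e1, e2, e3, Cc_zero_of_pos n hn, Cc_zero_of_pos (n+1) (by omega)]
          ring

/-- Gessel's realization of Stirling duality via Stanley's reciprocity:
for `k, n ≥ 1`, the number of order-preserving maps from `P_k` to the chain
`{1,…,n}` (encoded as `Fin n`) is `S(n+k, n)`, and the number of strictly
order-preserving maps is `c(n, n-k)` (which is `0` when `k > n`). -/

theorem stmt_19 (k n : ℕ) (hk : 1 ≤ k) (hn : 1 ≤ n) :
    Nat.card {f : Fin k × Fin 2 → Fin n //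
        ∀ a b : Fin k × Fin 2, gesselLE k a b → f a ≤ f b} =
      stirlingSubset (n + k) n ∧
    Nat.card {g : Fin k × Fin 2 → Fin n //
        ∀ a b : Fin k × Fin 2, gesselLE k a b ∧ a ≠ b → g a < g b} =
      stirlingCycle n (n - k) := by
  constructor
  · rw [card_weak n k, Ac_eq k n]
    rfl
  · rw [card_strict n k, Bc_eq n hn k]
    rfl
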